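/- For pairwise distinct x_1,...,x_n in a field, the sum over i of the Lagrange-type expressions recovers the identity Σ_{j=1}^{n} (-1)^{n-i} e_{n-i}(x̂_j) x_j^{m-1} / ∏_{k≠j}(x_j - x_k) = δ_{i,m} for 1 ≤ i, m ≤ n (entries of V^{-1} V = I). -/

import Mathlib

/-- The `k`-th elementary symmetric polynomial of `x_0, …, x_{m-1}`. -/
def esymmAux {R : Type*} [CommRing R] {m : ℕ} (x : Fin m → R) (k : ℕ) : R :=
  ∑ s ∈ Finset.powersetCard k Finset.univ, ∏ i ∈ s, x i

/-!
The `i`-th coefficient of a polynomial `f` of degree `≤ n` is read off its Lagrange interpolation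
at `n + 1` distinct nodes: `f = ∑ⱼ f(xⱼ) · nodal(x̂ⱼ) / ∏_{k ≠ j} (xⱼ - xₖ)`. By Vieta, the `i`-th
coefficient of `nodal(x̂ⱼ) = ∏_{k ≠ j} (X - xₖ)` is `(-1)^(n-i) e_{n-i}(x̂ⱼ)`, and for `f = X^m`
the `i`-th coefficient is `δ_{i,m}`.
-/

open Polynomial Finset Lagrange

theorem Fin.univ_erase_eq_map_succAboveEmb {n : ℕ} (j : Fin (n + 1)) :
    univ.erase j = univ.map j.succAboveEmb := by
  rw [Fin.univ_succAbove n j, erase_cons]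

namespace Lagrange

theorem nodal_univ_erase_eq_nodal_comp_succAbove {R : Type*} [CommRing R] {n : ℕ}
    (x : Fin (n + 1) → R) (j : Fin (n + 1)) :
    nodal (univ.erase j) x = nodal univ (x ∘ j.succAbove) := by
  rw [nodal, nodal, Fin.univ_erase_eq_map_succAboveEmb, prod_map]
  rfl

theorem coeff_nodal_univ {R : Type*} [CommRing R] {n : ℕ} (x : Fin n → R) {i : ℕ}
    (hi : i ≤ n) :
    (nodal univ x).coeff i = (-1) ^ (n - i) * esymmAux x (n - i) := by
  have hcard : Multiset.card (univ.val.map x) = n := by simp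
  have vieta := Multiset.prod_X_sub_C_coeff (univ.val.map x) (hcard.symm ▸ hi)
  rw [hcard, Finset.esymm_map_val, Multiset.map_map] at vieta
  exact vieta

theorem coeff_eq_sum_coeff_nodal_erase {F ι : Type*} [Field F] [DecidableEq ι]
    {s : Finset ι} {v : ι → F} (hvs : Set.InjOn v s) {f : F[X]} (hf : f.degree < #s) (i : ℕ) :
    f.coeff i =
      ∑ j ∈ s, f.eval (v j) * (nodal (s.erase j) v).coeff i / ∏ k ∈ s.erase j, (v j - v k) := by
  conv_lhs => rw [eq_interpolate hvs hf, interpolate_apply, finsetSum_coeff]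
  refine sum_congr rfl fun j hj => ?_
  rw [coeff_C_mul, basis_eq_prod_sub_inv_mul_nodal_div hj, ← nodal_erase_eq_nodal_div hj,
    coeff_C_mul, nodalWeight, prod_inv_distrib]
  ring

end Lagrange

/-- the entries of `V⁻¹ V = I`:
`Σ_j (-1)^{n-i} e_{n-i}(x̂_j) x_j^{m} / ∏_{k≠j}(x_j - x_k) = δ_{i,m}`
(size `n+1`, `0`-based indices `i, m`). -/
theorem stmt18 {F : Type*} [Field F] (n : ℕ) (x : Fin (n+1) → F)
    (hx : Function.Injective x) (i m : Fin (n+1)) :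
    (∑ j : Fin (n+1),
        (-1 : F) ^ (n - (i : ℕ)) * esymmAux (x ∘ j.succAbove) (n - (i : ℕ)) *
          x j ^ (m : ℕ) / ∏ k ∈ Finset.univ.erase j, (x j - x k))
      = if i = m then 1 else 0 := by
  have hdeg : ((X : F[X]) ^ (m : ℕ)).degree < #(univ : Finset (Fin (n + 1))) := by
    rw [degree_X_pow, card_univ, Fintype.card_fin]
    exact_mod_cast m.isLt
  have hcoeff := coeff_eq_sum_coeff_nodal_erase hx.injOn hdeg i
  simp only [coeff_X_pow, Fin.val_inj, eval_pow, eval_X, nodal_univ_erase_eq_nodal_comp_succAbove,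
    coeff_nodal_univ _ (Nat.lt_succ_iff.mp i.isLt)] at hcoeff
  rw [hcoeff]
  refine sum_congr rfl fun j _ => ?_
  ring
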